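/- arXiv:1506.02215 — 7 statements merged into one kernel-verified Lean document; each statement's English description precedes it below -/
import Mathlib

section
/- For positive integers a < b, the number b^4 - a^4 is never a perfect square. -/
/-!
Fermat's descent. Let `x ^ 4 - y ^ 4 = z ^ 2` with `x, y, z > 0` and `x, y` coprime.
If `y` is odd, `(y ^ 2, z, x ^ 2)` is a primitive Pythagorean triple, so
`y ^ 2 = m ^ 2 - n ^ 2` and `x ^ 2 = m ^ 2 + n ^ 2`, whence `m ^ 4 - n ^ 4 = (x * y) ^ 2`
with `m < x`.
If `y` is even, `(z, y ^ 2, x ^ 2)` is one, with `y ^ 2 = 2 * m * n`; the even one of `m, n` is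
twice a square and the odd one a square `t ^ 2`. Parametrising the primitive triple
`(odd, even, x)` once more as `(p ^ 2 - q ^ 2, 2 * p * q, p ^ 2 + q ^ 2)` forces `p = u ^ 2` and
`q = v ^ 2`, so `u ^ 4 - v ^ 4 = t ^ 2` with `u < x`. Either way `x` decreases.
-/

theorem Int.exists_pos_sq_of_isCoprime_of_mul_eq_sq {a b c : ℤ} (ha : 0 < a) (hab : IsCoprime a b)
    (h : a * b = c ^ 2) : ∃ d, 0 < d ∧ a = d ^ 2 := by
  obtain ⟨d, hd | hd⟩ := Int.sq_of_isCoprime hab h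
  · exact ⟨|d|, abs_pos.mpr (by rintro rfl; simp_all), by rwa [sq_abs]⟩
  · nlinarith [sq_nonneg d]

theorem PythagoreanTriple.exists_pos_of_isCoprime {a b c : ℤ} (h : PythagoreanTriple a b c)
    (hab : IsCoprime a b) (ha : Odd a) (hb : 0 < b) (hc : 0 < c) :
    ∃ m n, 0 < m ∧ 0 < n ∧ IsCoprime m n ∧
      a = m ^ 2 - n ^ 2 ∧ b = 2 * m * n ∧ c = m ^ 2 + n ^ 2 := by
  obtain ⟨m, n, ha', hb', hc', hmn, -, hm⟩ :=
    h.coprime_classification' (Int.isCoprime_iff_gcd_eq_one.mp hab) (Int.odd_iff.mp ha) hc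
  have hm : 0 < m := hm.lt_of_ne (by rintro rfl; simp_all)
  have hn : 0 < n := by nlinarith
  exact ⟨m, n, hm, hn, Int.isCoprime_iff_gcd_eq_one.mpr hmn, ha', hb', hc'⟩

namespace DiffFourthPowers

structure PrimitiveSolution (x y z : ℤ) : Prop where
  pos_x : 0 < x
  pos_y : 0 < y
  pos_z : 0 < z
  isCoprime : IsCoprime x y
  eq : x ^ 4 - y ^ 4 = z ^ 2

variable {x y z : ℤ}

theorem PrimitiveSolution.isCoprime_y_z (h : PrimitiveSolution x y z) : IsCoprime y z := by
  have hz : x ^ 4 + y * -y ^ 3 = z ^ 2 := by linear_combination h.eq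
  have : IsCoprime y (z ^ 2) := hz ▸ (h.isCoprime.symm.pow_right (n := 4)).add_mul_left_right _
  exact IsCoprime.pow_right_iff two_pos |>.mp this

theorem PrimitiveSolution.exists_lt_of_odd (h : PrimitiveSolution x y z) (hy : Odd y) :
    ∃ x' y' z', PrimitiveSolution x' y' z' ∧ x' < x := by
  have htriple : PythagoreanTriple (y ^ 2) z (x ^ 2) := by
    unfold PythagoreanTriple; linear_combination -h.eq
  obtain ⟨m, n, hm, hn, hmn, hy2, -, hx2⟩ :=
    htriple.exists_pos_of_isCoprime h.isCoprime_y_z.pow_left hy.pow h.pos_z (pow_pos h.pos_x 2)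
  refine ⟨m, n, x * y, ⟨hm, hn, mul_pos h.pos_x h.pos_y, hmn, ?_⟩, ?_⟩
  · linear_combination -(m ^ 2 + n ^ 2) * hy2 - y ^ 2 * hx2
  · nlinarith [h.pos_x]

theorem exists_lt_of_mul_eq_sq_of_sq_add_sq {x k n w : ℤ} (hx : 0 < x) (hk : 0 < k)
    (hn : 0 < n) (hkn : IsCoprime (2 * k) n) (hprod : k * n = w ^ 2)
    (hsum : n ^ 2 + (2 * k) ^ 2 = x ^ 2) :
    ∃ x' y' z', PrimitiveSolution x' y' z' ∧ x' < x := by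
  obtain ⟨s, -, rfl⟩ :=
    Int.exists_pos_sq_of_isCoprime_of_mul_eq_sq hk hkn.of_mul_left_right hprod
  obtain ⟨t, ht, rfl⟩ := Int.exists_pos_sq_of_isCoprime_of_mul_eq_sq hn
    hkn.of_mul_left_right.symm (by rw [mul_comm, hprod])
  have htriple : PythagoreanTriple (t ^ 2) (2 * s ^ 2) x := by
    unfold PythagoreanTriple; linear_combination hsum
  obtain ⟨p, q, hp, hq, hpq, ht2, hs2, hx'⟩ := htriple.exists_pos_of_isCoprime hkn.symm
    (Int.isCoprime_two_left.mp hkn.of_mul_left_left) (by positivity) hx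
  obtain ⟨u, hu, rfl⟩ := Int.exists_pos_sq_of_isCoprime_of_mul_eq_sq hp hpq (c := s)
    (by linarith)
  obtain ⟨v, hv, rfl⟩ := Int.exists_pos_sq_of_isCoprime_of_mul_eq_sq hq hpq.symm (c := s)
    (by linarith)
  refine ⟨u, v, t, ⟨hu, hv, ht, (IsCoprime.pow_iff two_pos two_pos).mp hpq, ?_⟩, ?_⟩
  · linear_combination -ht2
  · nlinarith [pow_pos hv 4]

theorem PrimitiveSolution.exists_lt_of_even (h : PrimitiveSolution x y z) (hy : Even y) :
    ∃ x' y' z', PrimitiveSolution x' y' z' ∧ x' < x := by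
  have hz : Odd z :=
    Int.isCoprime_two_left.mp (h.isCoprime_y_z.of_isCoprime_of_dvd_left hy.two_dvd)
  have htriple : PythagoreanTriple z (y ^ 2) (x ^ 2) := by
    unfold PythagoreanTriple; linear_combination -h.eq
  obtain ⟨m, n, hm, hn, hmn, -, hy2, hx2⟩ :=
    htriple.exists_pos_of_isCoprime h.isCoprime_y_z.symm.pow_right hz (pow_pos h.pos_y 2)
      (pow_pos h.pos_x 2)
  obtain ⟨w, rfl⟩ := hy
  have hprod : m * n = 2 * w ^ 2 := by linarith
  rcases Int.even_mul.mp (⟨w ^ 2, by linarith⟩ : Even (m * n)) with ⟨k, rfl⟩ | ⟨k, rfl⟩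
  · exact exists_lt_of_mul_eq_sq_of_sq_add_sq (k := k) (w := w) h.pos_x (by linarith) hn
      (by rwa [two_mul]) (by linarith) (by linear_combination -hx2)
  · exact exists_lt_of_mul_eq_sq_of_sq_add_sq (k := k) (w := w) h.pos_x (by linarith) hm
      (by rw [two_mul]; exact hmn.symm) (by linarith) (by linear_combination -hx2)

theorem PrimitiveSolution.exists_lt (h : PrimitiveSolution x y z) :
    ∃ x' y' z', PrimitiveSolution x' y' z' ∧ x' < x :=
  (Int.even_or_odd y).elim h.exists_lt_of_even h.exists_lt_of_odd

theorem not_primitiveSolution (x y z : ℤ) : ¬ PrimitiveSolution x y z := by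
  induction hn : x.toNat using Nat.strong_induction_on generalizing x y z with
  | _ n ih =>
    intro h
    obtain ⟨x', y', z', h', hlt⟩ := h.exists_lt
    exact ih x'.toNat (by have := h'.pos_x; omega) x' y' z' rfl h'

theorem exists_primitiveSolution {a b c : ℤ} (ha : 0 < a) (hab : a < b)
    (hc : c ^ 2 = b ^ 4 - a ^ 4) : ∃ x y z, PrimitiveSolution x y z := by
  obtain ⟨g, b', a', hg, hgcd, rfl, rfl⟩ :=
    Int.exists_gcd_one' (m := b) (n := a) (Int.gcd_pos_of_ne_zero_right _ ha.ne')
  have hg : (0 : ℤ) < g := by exact_mod_cast hg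
  have ha' : 0 < a' := pos_of_mul_pos_left ha hg.le
  have hab' : a' < b' := lt_of_mul_lt_mul_right hab hg.le
  obtain ⟨c', rfl⟩ : (g : ℤ) ^ 2 ∣ c := (Int.pow_dvd_pow_iff two_ne_zero).mp
    ⟨b' ^ 4 - a' ^ 4, by linear_combination hc⟩
  have hc' : c' ^ 2 = b' ^ 4 - a' ^ 4 := by
    have : (g : ℤ) ^ 4 * c' ^ 2 = (g : ℤ) ^ 4 * (b' ^ 4 - a' ^ 4) := by linear_combination hc
    exact mul_left_cancel₀ (by positivity) this
  have hdiff : 0 < b' ^ 4 - a' ^ 4 := sub_pos.mpr (by gcongr)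
  refine ⟨b', a', |c'|, ⟨ha'.trans hab', ha', abs_pos.mpr ?_, ?_, by rw [sq_abs, hc']⟩⟩
  · rintro rfl; simp at hc'; linarith
  · exact Int.isCoprime_iff_gcd_eq_one.mpr hgcd

end DiffFourthPowers

theorem no_square_diff_fourth_powers (a b : ℤ) (ha : 0 < a) (hab : a < b) :
    ¬ ∃ c : ℤ, c ^ 2 = b ^ 4 - a ^ 4 := by
  rintro ⟨c, hc⟩
  obtain ⟨x, y, z, h⟩ := DiffFourthPowers.exists_primitiveSolution ha hab hc
  exact DiffFourthPowers.not_primitiveSolution x y z h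
end

section
/- If s, c, λ are rational numbers with s^2 + c^2 = 1, 0 ≤ s ≤ 1, and s = λ^2, then s = 0 or s = 1. -/
/-!
Fermat's descent for `x⁴ - y⁴ = z²`. Writing `l = n / d` in lowest terms, `l⁴ + c² = 1` becomes
`d⁴ - n⁴ = (c d²)²`, and `c d²` is an integer because its square is. A primitive solution with
`y z ≠ 0` gives the primitive Pythagorean triple `(y², z, x²)` with parameters `m, n`. If `y` is
odd, then `m⁴ - n⁴ = (x y)²` with `|m| < |x|`. If `y` is even, `y² = 2 m n` forces `{m, n}` to be
`{2 a², b²}`, and the parameters `r², s²` of the primitive triple `(b², 2 a², x)` give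
`r⁴ - s⁴ = b²` with `|r| < |x|`.
-/

theorem Int.exists_sq_of_isCoprime_of_nonneg {a b c : ℤ} (hab : IsCoprime a b) (ha : 0 ≤ a)
    (h : a * b = c ^ 2) : ∃ r, a = r ^ 2 := by
  obtain ⟨r, hr | hr⟩ := Int.sq_of_isCoprime hab h
  · exact ⟨r, hr⟩
  · exact ⟨0, by nlinarith [sq_nonneg r]⟩

/-- Fermat's right triangle theorem (no right triangle with rational sides has square area) is
the nonexistence of such triples. -/
structure FermatRightTriangle (x y z : ℤ) : Prop where
  isCoprime : IsCoprime x y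
  y_ne_zero : y ≠ 0
  z_ne_zero : z ≠ 0
  eq : x ^ 4 - y ^ 4 = z ^ 2

namespace FermatRightTriangle

variable {x y z : ℤ}

theorem isCoprime_right (h : FermatRightTriangle x y z) : IsCoprime y z := by
  have hyz : IsCoprime y (x ^ 4 + y * -y ^ 3) := h.isCoprime.symm.pow_right.add_mul_left_right _
  rw [show x ^ 4 + y * -y ^ 3 = z * z by linear_combination h.eq] at hyz
  exact hyz.of_mul_right_left

theorem ne_zero_left (h : FermatRightTriangle x y z) : x ≠ 0 := by
  rintro rfl
  nlinarith [h.eq, pow_pos (sq_pos_of_ne_zero h.y_ne_zero) 2, sq_nonneg z]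

theorem pythagoreanTriple (h : FermatRightTriangle x y z) :
    PythagoreanTriple (y ^ 2) z (x ^ 2) := by
  unfold PythagoreanTriple
  linear_combination -h.eq

theorem exists_smaller_of_odd (h : FermatRightTriangle x y z) (hy : Odd y) :
    ∃ x' y' z', FermatRightTriangle x' y' z' ∧ x'.natAbs < x.natAbs := by
  obtain ⟨m, n, hy2, hz, hx2, hmn, -, -⟩ := h.pythagoreanTriple.coprime_classification'
    (Int.isCoprime_iff_gcd_eq_one.mp h.isCoprime_right.pow_left) (Int.odd_iff.mp hy.pow)
    (sq_pos_of_ne_zero h.ne_zero_left)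
  have hn : n ≠ 0 := by rintro rfl; exact h.z_ne_zero (by simpa using hz)
  refine ⟨m, n, x * y, ⟨Int.isCoprime_iff_gcd_eq_one.mpr hmn, hn,
    mul_ne_zero h.ne_zero_left h.y_ne_zero,
    by linear_combination (-x ^ 2) * hy2 - (m ^ 2 - n ^ 2) * hx2⟩, ?_⟩
  rw [Int.natAbs_lt_iff_sq_lt, hx2]
  linarith [sq_pos_of_ne_zero hn]

theorem exists_smaller_of_mul_eq_two_mul_sq {m n c : ℤ} (hmn : IsCoprime m n) (hm : 0 < m)
    (hn : 0 < n) (hc : m * n = 2 * c ^ 2) (hx : x ^ 2 = m ^ 2 + n ^ 2) :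
    ∃ x' y' z', FermatRightTriangle x' y' z' ∧ x'.natAbs < x.natAbs := by
  wlog hme : Even m generalizing m n
  · have hne : Even n :=
      (Int.even_mul.mp (hc ▸ even_two_mul _)).resolve_left hme
    exact this hmn.symm hn hm (by linarith) (by linarith) hne
  obtain ⟨d, rfl⟩ : ∃ d, m = 2 * d := hme.two_dvd
  have hdn : IsCoprime d n := hmn.of_isCoprime_of_dvd_left (dvd_mul_left d 2)
  obtain ⟨a, rfl⟩ := Int.exists_sq_of_isCoprime_of_nonneg hdn (by linarith)
    (by linarith : d * n = c ^ 2)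
  obtain ⟨b, rfl⟩ := Int.exists_sq_of_isCoprime_of_nonneg hdn.symm hn.le
    (by linarith : n * a ^ 2 = c ^ 2)
  have ha : a ≠ 0 := by rintro rfl; simp at hm
  have hb : b ≠ 0 := by rintro rfl; simp at hn
  have hx0 : x ≠ 0 := by rintro rfl; nlinarith
  have ht : PythagoreanTriple (b ^ 2) (2 * a ^ 2) (x.natAbs : ℤ) := by
    unfold PythagoreanTriple
    rw [Int.natCast_natAbs, abs_mul_abs_self]
    linear_combination -hx
  obtain ⟨p, q, hb2, ha2, hx', hpq, -, hp⟩ := ht.coprime_classification'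
    (Int.isCoprime_iff_gcd_eq_one.mp hmn.symm)
    (Int.odd_iff.mp (Int.isCoprime_two_right.mp
      (hmn.symm.of_isCoprime_of_dvd_right (dvd_mul_right 2 _))))
    (by simpa using hx0)
  have hpq_sq : p * q = a ^ 2 := by linarith
  have hq : 0 < q := by nlinarith [sq_pos_of_ne_zero ha]
  have hcop : IsCoprime p q := Int.isCoprime_iff_gcd_eq_one.mpr hpq
  obtain ⟨r, rfl⟩ := Int.exists_sq_of_isCoprime_of_nonneg hcop hp hpq_sq
  obtain ⟨s, rfl⟩ := Int.exists_sq_of_isCoprime_of_nonneg hcop.symm hq.le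
    (by rw [mul_comm]; exact hpq_sq)
  refine ⟨r, s, b, ⟨(IsCoprime.pow_iff two_pos two_pos).mp hcop, by rintro rfl; simp at hq, hb,
    by linear_combination -hb2⟩, ?_⟩
  have hlt : (r.natAbs : ℤ) < x.natAbs := by
    linarith [Int.natAbs_le_self_sq r, Int.le_self_sq (r ^ 2), pow_pos hq 2]
  exact_mod_cast hlt

theorem exists_smaller_of_even (h : FermatRightTriangle x y z) (hy : Even y) :
    ∃ x' y' z', FermatRightTriangle x' y' z' ∧ x'.natAbs < x.natAbs := by
  have hz : Odd z :=
    Int.isCoprime_two_right.mp (h.isCoprime_right.symm.of_isCoprime_of_dvd_right hy.two_dvd)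
  obtain ⟨m, n, -, hy2, hx2, hmn, -, hm⟩ := h.pythagoreanTriple.symm.coprime_classification'
    (Int.isCoprime_iff_gcd_eq_one.mp h.isCoprime_right.symm.pow_right) (Int.odd_iff.mp hz)
    (sq_pos_of_ne_zero h.ne_zero_left)
  obtain ⟨c, rfl⟩ : ∃ c, y = 2 * c := hy.two_dvd
  have hmn0 : 0 < m * n := by nlinarith [sq_pos_of_ne_zero h.y_ne_zero]
  exact exists_smaller_of_mul_eq_two_mul_sq (Int.isCoprime_iff_gcd_eq_one.mpr hmn)
    (lt_of_le_of_ne hm (by rintro rfl; simp at hmn0)) (pos_of_mul_pos_right hmn0 hm)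
    (by linarith) hx2

theorem exists_smaller (h : FermatRightTriangle x y z) :
    ∃ x' y' z', FermatRightTriangle x' y' z' ∧ x'.natAbs < x.natAbs :=
  y.even_or_odd.elim h.exists_smaller_of_even h.exists_smaller_of_odd

end FermatRightTriangle

theorem not_fermatRightTriangle (x y z : ℤ) : ¬FermatRightTriangle x y z := by
  intro h
  induction hN : x.natAbs using Nat.strong_induction_on generalizing x y z with
  | _ N ih =>
    obtain ⟨x', y', z', h', hlt⟩ := h.exists_smaller
    exact ih _ (hN ▸ hlt) x' y' z' h' rfl

theorem Int.eq_zero_or_eq_zero_of_pow_four_sub_pow_four_eq_sq {x y z : ℤ} (hxy : IsCoprime x y)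
    (h : x ^ 4 - y ^ 4 = z ^ 2) : y = 0 ∨ z = 0 := by
  by_contra! hyz
  exact not_fermatRightTriangle x y z ⟨hxy, hyz.1, hyz.2, h⟩

theorem Rat.eq_zero_or_eq_zero_of_pow_four_add_sq_eq_one {l c : ℚ} (h : l ^ 4 + c ^ 2 = 1) :
    l = 0 ∨ c = 0 := by
  set q := c * l.den ^ 2
  have hq2 : q ^ 2 = ((l.den ^ 4 - l.num ^ 4 : ℤ) : ℚ) := by
    push_cast
    rw [← Rat.mul_den_eq_num]
    linear_combination (l.den : ℚ) ^ 4 * h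
  have hqden : q.den = 1 := by
    have := congrArg Rat.den hq2
    rw [Rat.den_pow, Rat.den_intCast] at this
    exact (Nat.pow_eq_one.mp this).resolve_right two_ne_zero
  have hZ : (l.den : ℤ) ^ 4 - l.num ^ 4 = q.num ^ 2 := by
    rw [← Rat.coe_int_num_of_den_eq_one hqden] at hq2
    exact_mod_cast hq2.symm
  have hcop : IsCoprime (l.den : ℤ) l.num := by
    rw [Int.isCoprime_iff_gcd_eq_one, Int.gcd_comm]
    exact l.reduced
  rcases Int.eq_zero_or_eq_zero_of_pow_four_sub_pow_four_eq_sq hcop hZ with h0 | h0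
  · exact .inl (Rat.num_eq_zero.mp h0)
  · exact .inr ((mul_eq_zero.mp (Rat.num_eq_zero.mp h0)).resolve_right (by positivity))

theorem heron_sin_rational_square_general (s c l : ℚ) (h : s ^ 2 + c ^ 2 = 1)
    (hl : s = l ^ 2) : s = 0 ∨ s = 1 := by
  subst hl
  have h4 : l ^ 4 + c ^ 2 = 1 := by linear_combination h
  rcases Rat.eq_zero_or_eq_zero_of_pow_four_add_sq_eq_one h4 with hl0 | hc0
  · simp [hl0]
  · subst hc0
    right
    nlinarith [sq_nonneg l]

theorem heron_sin_rational_square (s c l : ℚ) (h : s ^ 2 + c ^ 2 = 1)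
    (hs0 : 0 ≤ s) (hs1 : s ≤ 1) (hl : s = l ^ 2) : s = 0 ∨ s = 1 :=
  heron_sin_rational_square_general s c l h hl
end

section
/- The only rational points (x, y) on the curve y^2 = x(1 - x^2) are (-1, 0), (0, 0), and (1, 0). -/
/-!
Write `x = p / q` in lowest terms. Then `(y q²)² = p q (q² - p²)` with pairwise coprime factors,
so `p² = e⁴`, `q² = t⁴` and `(q² - p²)² = f⁴`, and a point with `y ≠ 0` gives
`t⁴ - e⁴ = ±f²` with `e t f ≠ 0`. Fermat's descent rules this out: for coprime `a`, `b`, a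
solution of `a⁴ - b⁴ = c²` makes `(b², c, a²)` a primitive Pythagorean triple, whose
parametrisation yields a solution with smaller `|a|`: directly if `b` is odd, and if `b` is even
after a second parametrisation, of the triple `(v², 2u², a)` with `a² = 4u⁴ + v⁴`.
-/

def Fermat42Sub (a b c : ℤ) : Prop :=
  b ≠ 0 ∧ c ≠ 0 ∧ a ^ 4 - b ^ 4 = c ^ 2

namespace Int

theorem exists_eq_sq_of_isCoprime_of_nonneg {a b c : ℤ} (hab : IsCoprime a b) (ha : 0 ≤ a)
    (h : a * b = c ^ 2) : ∃ d, a = d ^ 2 := by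
  obtain ⟨d, hd | hd⟩ := Int.sq_of_isCoprime hab h
  · exact ⟨d, hd⟩
  · exact ⟨0, by nlinarith [sq_nonneg d]⟩

theorem exists_sq_eq_pow_four_of_isCoprime {a b c : ℤ} (hab : IsCoprime a b)
    (h : a * b = c ^ 2) : ∃ d, a ^ 2 = d ^ 4 := by
  obtain ⟨d, hd | hd⟩ := Int.sq_of_isCoprime hab h <;> exact ⟨d, by rw [hd]; ring⟩

end Int

namespace Fermat42Sub

theorem ne_zero {a b c : ℤ} (h : Fermat42Sub a b c) : a ≠ 0 := by
  obtain ⟨hb, -, h⟩ := h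
  rintro rfl
  have : 0 < b ^ 4 := by positivity
  nlinarith [sq_nonneg c]

theorem exists_isCoprime_natAbs_le {a b c : ℤ} (h : Fermat42Sub a b c) :
    ∃ a' b' c', Fermat42Sub a' b' c' ∧ IsCoprime a' b' ∧ a'.natAbs ≤ a.natAbs := by
  obtain ⟨hb, hc, habc⟩ := h
  obtain ⟨g, a', b', hg, hcop, rfl, rfl⟩ :=
    Int.exists_gcd_one' (Int.gcd_pos_of_ne_zero_right a hb)
  obtain ⟨c', rfl⟩ : (g : ℤ) ^ 2 ∣ c := by
    rw [← Int.pow_dvd_pow_iff two_ne_zero, ← habc]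
    exact ⟨a' ^ 4 - b' ^ 4, by ring⟩
  refine ⟨a', b', c', ⟨?_, ?_, ?_⟩, Int.isCoprime_iff_gcd_eq_one.mpr hcop, ?_⟩
  · rintro rfl; simp at hb
  · rintro rfl; simp at hc
  · apply mul_left_cancel₀ (pow_ne_zero 4 (by positivity : (g : ℤ) ≠ 0))
    linear_combination habc
  · rw [Int.natAbs_mul, Int.natAbs_natCast]
    exact Nat.le_mul_of_pos_right _ hg

theorem exists_natAbs_lt_of_sq_eq_four_mul_pow_four_add_pow_four {a p q : ℤ} (hp : p ≠ 0)
    (hq : Odd q) (hpq : IsCoprime p q) (h : a ^ 2 = 4 * p ^ 4 + q ^ 4) :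
    ∃ s t, Fermat42Sub s t q ∧ s.natAbs < a.natAbs := by
  have htriple : PythagoreanTriple (q ^ 2) (2 * p ^ 2) |a| := by
    unfold PythagoreanTriple
    rw [abs_mul_abs_self]
    linear_combination -h
  have hcop : IsCoprime (q ^ 2) (2 * p ^ 2) :=
    (Int.isCoprime_two_right.mpr hq.pow).mul_right
      ((IsCoprime.pow_iff two_pos two_pos).mpr hpq.symm)
  have ha_pos : 0 < |a| := by
    have : 0 < p ^ 4 := by positivity
    exact abs_pos.mpr (by rintro rfl; linarith [pow_nonneg (sq_nonneg q) 2])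
  obtain ⟨u, v, hq2, hp2, ha, huv, -, hu⟩ := htriple.coprime_classification'
    (Int.isCoprime_iff_gcd_eq_one.mp hcop) (Int.odd_iff.mp hq.pow) ha_pos
  have huv' : u * v = p ^ 2 := by linarith
  have hv : 0 < v := pos_of_mul_pos_right (by rw [huv']; positivity) hu
  have huv_cop : IsCoprime u v := Int.isCoprime_iff_gcd_eq_one.mpr huv
  obtain ⟨s, rfl⟩ := Int.exists_eq_sq_of_isCoprime_of_nonneg huv_cop hu huv'
  obtain ⟨t, rfl⟩ := Int.exists_eq_sq_of_isCoprime_of_nonneg huv_cop.symm hv.le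
    (by rw [mul_comm]; exact huv')
  refine ⟨s, t, ⟨?_, ?_, by linear_combination -hq2⟩, ?_⟩
  · rintro rfl; simp at hv
  · rintro rfl; simp at hq
  have hs : |s| ^ 4 < |a| := by
    rw [ha, Even.pow_abs (by decide)]
    have : 0 < (t ^ 2) ^ 2 := by positivity
    linarith
  calc s.natAbs ≤ s.natAbs ^ 4 := Nat.le_self_pow (by norm_num) _
    _ < a.natAbs := by zify; exact hs

theorem exists_natAbs_lt_of_sq_eq_sq_add_sq {a b m n : ℤ} (hm : 0 < m) (hn : 0 < n)
    (hmn : IsCoprime m n) (hme : Even m) (hb : b ^ 2 = 2 * m * n)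
    (ha : a ^ 2 = m ^ 2 + n ^ 2) : ∃ s t r, Fermat42Sub s t r ∧ s.natAbs < a.natAbs := by
  obtain ⟨k, rfl⟩ := hme
  rw [← two_mul] at hmn
  have hno : Odd n := Int.isCoprime_two_left.mp (hmn.of_isCoprime_of_dvd_left (dvd_mul_right 2 k))
  obtain ⟨β, rfl⟩ : Even b := (Int.even_pow.mp ⟨2 * k * n, by rw [hb]; ring⟩).1
  have hkn : k * n = β ^ 2 := by linarith
  have hk : 0 < k := by linarith
  have hkn_cop : IsCoprime k n := hmn.of_mul_left_right
  obtain ⟨p, rfl⟩ := Int.exists_eq_sq_of_isCoprime_of_nonneg hkn_cop hk.le hkn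
  obtain ⟨q, rfl⟩ := Int.exists_eq_sq_of_isCoprime_of_nonneg hkn_cop.symm hn.le
    (by rw [mul_comm]; exact hkn)
  obtain ⟨s, t, hst, hlt⟩ := exists_natAbs_lt_of_sq_eq_four_mul_pow_four_add_pow_four (a := a)
    (by rintro rfl; simp at hk) ((Int.odd_pow.mp hno).resolve_right two_ne_zero)
    ((IsCoprime.pow_iff two_pos two_pos).mp hkn_cop) (by linear_combination ha)
  exact ⟨s, t, q, hst, hlt⟩

theorem exists_natAbs_lt_of_odd {a b c : ℤ} (h : Fermat42Sub a b c) (hbc : IsCoprime (b ^ 2) c)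
    (hbo : Odd b) : ∃ a' b' c', Fermat42Sub a' b' c' ∧ a'.natAbs < a.natAbs := by
  have ha0 := h.ne_zero
  obtain ⟨hb, hc, habc⟩ := h
  have htriple : PythagoreanTriple (b ^ 2) c (a ^ 2) := by
    unfold PythagoreanTriple
    linear_combination -habc
  obtain ⟨m, n, hb2, hc2, ha2, -, -, -⟩ := htriple.coprime_classification'
    (Int.isCoprime_iff_gcd_eq_one.mp hbc) (Int.odd_iff.mp hbo.pow) (by positivity)
  have hn : n ≠ 0 := by rintro rfl; simp at hc2; exact hc hc2
  refine ⟨m, n, a * b, ⟨hn, mul_ne_zero ha0 hb, ?_⟩, ?_⟩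
  · linear_combination -(m ^ 2 + n ^ 2) * hb2 - b ^ 2 * ha2
  · rw [Int.natAbs_lt_iff_sq_lt, ha2]
    have : 0 < n ^ 2 := by positivity
    linarith

theorem exists_natAbs_lt_of_even {a b c : ℤ} (h : Fermat42Sub a b c) (hbc : IsCoprime (b ^ 2) c)
    (hbe : Even b) : ∃ a' b' c', Fermat42Sub a' b' c' ∧ a'.natAbs < a.natAbs := by
  have ha0 := h.ne_zero
  obtain ⟨hb, -, habc⟩ := h
  have hco : Odd c := Int.isCoprime_two_left.mp
    (hbc.of_isCoprime_of_dvd_left (Int.even_pow.mpr ⟨hbe, two_ne_zero⟩).two_dvd)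
  have htriple : PythagoreanTriple c (b ^ 2) (a ^ 2) := by
    unfold PythagoreanTriple
    linear_combination -habc
  obtain ⟨m, n, -, hb2, ha2, hmn, hpar, hm⟩ := htriple.coprime_classification'
    (Int.isCoprime_iff_gcd_eq_one.mp hbc.symm) (Int.odd_iff.mp hco) (by positivity)
  have hmn_pos : 0 < m * n := by
    have : 0 < b ^ 2 := by positivity
    linarith
  have hm : 0 < m := lt_of_le_of_ne hm (by rintro rfl; simp at hmn_pos)
  have hn : 0 < n := pos_of_mul_pos_right hmn_pos hm.le
  have hmn_cop := Int.isCoprime_iff_gcd_eq_one.mpr hmn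
  rcases hpar with ⟨hme, -⟩ | ⟨-, hne⟩
  · exact exists_natAbs_lt_of_sq_eq_sq_add_sq hm hn hmn_cop (Int.even_iff.mpr hme) hb2 ha2
  · exact exists_natAbs_lt_of_sq_eq_sq_add_sq (a := a) (b := b) hn hm hmn_cop.symm
      (Int.even_iff.mpr hne) (by linear_combination hb2) (by linear_combination ha2)

theorem exists_natAbs_lt_of_isCoprime {a b c : ℤ} (h : Fermat42Sub a b c) (hab : IsCoprime a b) :
    ∃ a' b' c', Fermat42Sub a' b' c' ∧ a'.natAbs < a.natAbs := by
  have hbc : IsCoprime (b ^ 2) c := by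
    have := (hab.symm.pow_right (n := 4)).add_mul_left_right (-b ^ 3)
    rw [show a ^ 4 + b * -b ^ 3 = c ^ 2 by linear_combination h.2.2,
      IsCoprime.pow_right_iff two_pos] at this
    exact this.pow_left
  rcases Int.even_or_odd b with hbe | hbo
  · exact h.exists_natAbs_lt_of_even hbc hbe
  · exact h.exists_natAbs_lt_of_odd hbc hbo

theorem not_fermat42Sub (a b c : ℤ) : ¬Fermat42Sub a b c := fun h => by
  obtain ⟨a₁, b₁, c₁, h₁, hcop, hle⟩ := h.exists_isCoprime_natAbs_le
  obtain ⟨a₂, b₂, c₂, h₂, hlt⟩ := h₁.exists_natAbs_lt_of_isCoprime hcop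
  exact not_fermat42Sub a₂ b₂ c₂ h₂
termination_by a.natAbs

end Fermat42Sub

theorem Int.eq_zero_of_isSquare_mul_mul_sq_sub_sq {p q : ℤ} (hpq : IsCoprime p q)
    (h : IsSquare (p * q * (q ^ 2 - p ^ 2))) : p * q * (q ^ 2 - p ^ 2) = 0 := by
  by_contra hne
  obtain ⟨⟨hp, hq⟩, hd⟩ := by simpa only [mul_ne_zero_iff] using hne
  obtain ⟨w, hw⟩ := h
  rw [← sq] at hw
  have hpd : IsCoprime p (q ^ 2 - p ^ 2) := by
    simpa only [mul_neg, ← sq, ← sub_eq_add_neg] using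
      (hpq.pow_right (n := 2)).add_mul_left_right (-p)
  have hqd : IsCoprime q (q ^ 2 - p ^ 2) := by
    simpa only [← sq, neg_add_eq_sub] using
      (hpq.symm.pow_right (n := 2)).neg_right.add_mul_left_right q
  obtain ⟨e, he⟩ := Int.exists_sq_eq_pow_four_of_isCoprime (hpq.mul_right hpd) (c := w)
    (by linear_combination hw)
  obtain ⟨t, ht⟩ := Int.exists_sq_eq_pow_four_of_isCoprime (hpq.symm.mul_right hqd) (c := w)
    (by linear_combination hw)
  obtain ⟨f, hf⟩ := Int.exists_sq_eq_pow_four_of_isCoprime (hpd.symm.mul_right hqd.symm)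
    (c := w) (by linear_combination hw)
  have hdiff : (t ^ 4 - e ^ 4) ^ 2 = (f ^ 2) ^ 2 := by
    rw [← ht, ← he]; linear_combination hf
  have he0 : e ≠ 0 := by rintro rfl; simp_all
  have ht0 : t ≠ 0 := by rintro rfl; simp_all
  have hf0 : f ≠ 0 := by rintro rfl; simp_all
  rcases sq_eq_sq_iff_eq_or_eq_neg.mp hdiff with hdiff | hdiff
  · exact Fermat42Sub.not_fermat42Sub t e f ⟨he0, hf0, hdiff⟩
  · exact Fermat42Sub.not_fermat42Sub e t f ⟨ht0, hf0, by linear_combination -hdiff⟩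

theorem curve_x_sub_x_cubed_trivial_points (x y : ℚ) (h : y ^ 2 = x * (1 - x ^ 2)) :
    (x = -1 ∧ y = 0) ∨ (x = 0 ∧ y = 0) ∨ (x = 1 ∧ y = 0) := by
  have hden : (x.den : ℚ) ≠ 0 := by positivity
  have hsq : ((x.num * x.den * (x.den ^ 2 - x.num ^ 2) : ℤ) : ℚ) = (y * x.den ^ 2) ^ 2 := by
    push_cast
    rw [← Rat.mul_den_eq_num]
    linear_combination -(x.den : ℚ) ^ 4 * h
  have hy : y = 0 := by
    have h0 := Int.eq_zero_of_isSquare_mul_mul_sq_sub_sq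
      (Rat.isCoprime_num_den x)
      (Rat.isSquare_intCast_iff.mp ⟨_, hsq.trans (sq _)⟩)
    rw [h0, Int.cast_zero, eq_comm] at hsq
    simpa [hden] using hsq
  subst hy
  have hx : (x + 1) * x * (x - 1) = 0 := by linear_combination h
  simp only [mul_eq_zero, add_eq_zero_iff_eq_neg, sub_eq_zero] at hx
  tauto
end

section
/- The only rational points (x, y) on the curve y^2 = 2x(1 - x^2) are (-1, 0), (0, 0), and (1, 0). -/
/-!
For `x ≠ 0` the substitution `u = y / (2x)`, `v = -x - u²` maps the curve
`y² = 2x(1 - x²)` to the quartic `v² = u⁴ + 1`. Writing `u = a / b` in lowest terms, a rational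
point on the quartic with `u ≠ 0` gives `a⁴ + b⁴ = (v b²)²`, which is a square in `ℚ` and hence
in `ℤ`, contradicting Fermat's theorem on `a⁴ + b⁴ = c²`. So `y = 0` on the curve away from
`x = 0`, and the remaining points are the roots of `2x(1 - x²)`.
-/

theorem sq_eq_pow_four_add_one_of_sq_eq_two_mul_one_sub_sq {K : Type*} [Field K] [NeZero (2 : K)]
    {x y : K} (hx : x ≠ 0) (h : y ^ 2 = 2 * x * (1 - x ^ 2)) :
    (-x - (y / (2 * x)) ^ 2) ^ 2 = (y / (2 * x)) ^ 4 + 1 := by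
  field_simp
  linear_combination 8 * x ^ 3 * h

theorem Rat.eq_zero_of_sq_eq_pow_four_add_one {u v : ℚ} (h : v ^ 2 = u ^ 4 + 1) : u = 0 := by
  by_contra hu
  have hsq : IsSquare ((u.num ^ 4 + (u.den : ℤ) ^ 4 : ℤ) : ℚ) := by
    refine ⟨v * (u.den : ℚ) ^ 2, ?_⟩
    push_cast
    rw [← Rat.mul_den_eq_num u]
    linear_combination -(u.den : ℚ) ^ 4 * h
  obtain ⟨c, hc⟩ := Rat.isSquare_intCast_iff.mp hsq
  exact not_fermat_42 (Rat.num_ne_zero.mpr hu) (Int.natCast_ne_zero.mpr u.den_nz)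
    (hc.trans (sq c).symm)

theorem curve_two_x_sub_x_cubed_trivial_points (x y : ℚ) (h : y ^ 2 = 2 * x * (1 - x ^ 2)) :
    (x = -1 ∧ y = 0) ∨ (x = 0 ∧ y = 0) ∨ (x = 1 ∧ y = 0) := by
  by_cases hy : y = 0
  · subst hy
    have hroots : (x + 1) * x * (x - 1) = 0 := by linear_combination h / 2
    rcases mul_eq_zero.mp hroots with hprod | hx
    · rcases mul_eq_zero.mp hprod with hx | hx
      · exact Or.inl ⟨by linear_combination hx, rfl⟩
      · exact Or.inr (Or.inl ⟨hx, rfl⟩)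
    · exact Or.inr (Or.inr ⟨by linear_combination hx, rfl⟩)
  · have hx : x ≠ 0 := by
      rintro rfl
      exact hy (pow_eq_zero_iff two_ne_zero |>.mp (by simpa using h))
    have hu := Rat.eq_zero_of_sq_eq_pow_four_add_one
      (sq_eq_pow_four_add_one_of_sq_eq_two_mul_one_sub_sq hx h)
    exact absurd hu (div_ne_zero hy (mul_ne_zero two_ne_zero hx))
end

section
/- There are no rational numbers t, u with t > 0 and u > 0 such that 1 - t^4 = t^2 u^2 and both (1-t^2)/(1+t^2), 2t/(1+t^2) are rational with t corresponding to a Heron angle, i.e., the equation 1 - tan^4 α = tan^2 α · tan^2 ψ has no solutions with α a Heron angle (0 < α < π/2) and ψ a Heron angle with tan ψ > 0. -/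
/-!
Writing `t = tan α` and `u = tan ψ`, both rational, the equation says `1 ^ 4 - t ^ 4 = (t u) ^ 2`,
a rational point with `t u ≠ 0` on `x ^ 4 - y ^ 4 = z ^ 2`. Clearing denominators, this
contradicts Fermat's descent: for a primitive integer solution, `(y ^ 2, z, x ^ 2)` is a primitive
Pythagorean triple, and parametrizing it (and, when `z` is odd, the triple `(m, n, x)` built from
the parameters) produces a solution with smaller positive `x`.
-/

theorem PythagoreanTriple.exists_mul_eq_of_coprime {m n x : ℤ} (h : PythagoreanTriple m n x)
    (hmn : Int.gcd m n = 1) (hm : 0 < m) (hn : 0 < n) (hx : 0 < x) :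
    ∃ p q, 0 < q ∧ q < p ∧ IsCoprime p q ∧ m * n = 2 * p * q * (p ^ 2 - q ^ 2) ∧
      x = p ^ 2 + q ^ 2 := by
  wlog hmo : m % 2 = 1 generalizing m n
  · have hno : n % 2 = 1 := by
      have := h.even_odd_of_coprime hmn
      omega
    obtain ⟨p, q, hq, hqp, hpq, hnm, hx⟩ :=
      this h.symm (by rwa [Int.gcd_comm]) hn hm hno
    exact ⟨p, q, hq, hqp, hpq, by rw [mul_comm, hnm], hx⟩
  obtain ⟨p, q, rfl, rfl, rfl, hpq, -, hp⟩ := h.coprime_classification' hmn hmo hx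
  have hp : 0 < p := by
    rcases hp.lt_or_eq with hp | rfl
    · exact hp
    · simp at hn
  have hq : 0 < q := by nlinarith
  exact ⟨p, q, hq, by nlinarith, Int.isCoprime_iff_gcd_eq_one.mpr hpq, by ring, rfl⟩

namespace Int

theorem exists_pos_sq_of_isCoprime {a b c : ℤ} (h : IsCoprime a b) (ha : 0 < a)
    (heq : a * b = c ^ 2) : ∃ d, 0 < d ∧ a = d ^ 2 := by
  obtain ⟨d, rfl | rfl⟩ := sq_of_isCoprime h heq
  · exact ⟨|d|, abs_pos.mpr (by rintro rfl; simp at ha), (sq_abs d).symm⟩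
  · nlinarith [sq_nonneg d]

theorem exists_pos_sq_of_mul_mul_eq_sq {a b c w : ℤ} (hab : IsCoprime a b)
    (hac : IsCoprime a c) (hbc : IsCoprime b c) (ha : 0 < a) (hb : 0 < b) (hc : 0 < c)
    (h : a * b * c = w ^ 2) :
    (∃ d, 0 < d ∧ a = d ^ 2) ∧ (∃ e, 0 < e ∧ b = e ^ 2) ∧
      (∃ f, 0 < f ∧ c = f ^ 2) :=
  ⟨exists_pos_sq_of_isCoprime (hab.mul_right hac) ha (by rw [← h]; ring),
    exists_pos_sq_of_isCoprime (hab.symm.mul_right hbc) hb (by rw [← h]; ring),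
    exists_pos_sq_of_isCoprime (hac.symm.mul_right hbc.symm) hc (by rw [← h]; ring)⟩

theorem isCoprime_sq_sub_sq_left {p q : ℤ} (h : IsCoprime p q) :
    IsCoprime (p ^ 2 - q ^ 2) p := by
  have : IsCoprime (q ^ 2 - p * p) p := IsCoprime.sub_mul_left_left_iff.mpr h.symm.pow_left
  simpa [neg_sub, sq] using this.neg_left

theorem isCoprime_sq_sub_sq_right {p q : ℤ} (h : IsCoprime p q) :
    IsCoprime (p ^ 2 - q ^ 2) q := by
  rw [sq q]
  exact IsCoprime.sub_mul_left_left_iff.mpr h.pow_left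

theorem exists_gcd_eq_one_of_pow_four_sub_pow_four_eq_sq {x y z : ℤ} (hx : 0 < x) (hy : y ≠ 0)
    (hz : z ≠ 0) (h : x ^ 4 - y ^ 4 = z ^ 2) :
    ∃ x' y' z', 0 < x' ∧ x' ≤ x ∧ y' ≠ 0 ∧ z' ≠ 0 ∧ Int.gcd x' y' = 1 ∧
      x' ^ 4 - y' ^ 4 = z' ^ 2 := by
  obtain ⟨g, x', y', hg, hxy', rfl, rfl⟩ := exists_gcd_one' (gcd_pos_of_ne_zero_left y hx.ne')
  obtain ⟨z', rfl⟩ : (g : ℤ) ^ 2 ∣ z := by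
    rw [← Int.pow_dvd_pow_iff two_ne_zero]
    exact ⟨x' ^ 4 - y' ^ 4, by linear_combination -h⟩
  have hg : (0 : ℤ) < g := by exact_mod_cast hg
  have hx' : 0 < x' := pos_of_mul_pos_left hx hg.le
  refine ⟨x', y', z', hx', le_mul_of_one_le_right hx'.le (by omega), left_ne_zero_of_mul hy,
    right_ne_zero_of_mul hz, hxy', ?_⟩
  exact mul_left_cancel₀ (pow_ne_zero 4 hg.ne') (by linear_combination h)

theorem exists_lt_of_pythagoreanTriple_of_odd_left {x y z : ℤ} (hx : 0 < x) (hy : y ≠ 0)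
    (hz : z ≠ 0) (h : PythagoreanTriple (y ^ 2) z (x ^ 2)) (hcop : Int.gcd (y ^ 2) z = 1)
    (hyo : y ^ 2 % 2 = 1) :
    ∃ x' y' z', 0 < x' ∧ x' < x ∧ y' ≠ 0 ∧ z' ≠ 0 ∧ x' ^ 4 - y' ^ 4 = z' ^ 2 := by
  obtain ⟨m, n, hymn, rfl, hxmn, -, -, hm⟩ := h.coprime_classification' hcop hyo (by positivity)
  have hn : n ≠ 0 := by rintro rfl; simp at hz
  have hm : 0 < m :=
    hm.lt_of_ne' (by rintro rfl; nlinarith [sq_pos_of_ne_zero hy, sq_nonneg n])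
  refine ⟨m, n, x * y, hm, ?_, hn, mul_ne_zero hx.ne' hy,
    by linear_combination -x ^ 2 * hymn - (m ^ 2 - n ^ 2) * hxmn⟩
  exact lt_of_pow_lt_pow_left₀ 2 hx.le (by rw [hxmn]; nlinarith [sq_pos_of_ne_zero hn])

theorem exists_lt_of_pythagoreanTriple_of_odd_right {x y z : ℤ} (hx : 0 < x) (hy : y ≠ 0)
    (h : PythagoreanTriple (y ^ 2) z (x ^ 2)) (hcop : Int.gcd (y ^ 2) z = 1)
    (hzo : z % 2 = 1) :
    ∃ x' y' z', 0 < x' ∧ x' < x ∧ y' ≠ 0 ∧ z' ≠ 0 ∧ x' ^ 4 - y' ^ 4 = z' ^ 2 := by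
  obtain ⟨m, n, -, hymn, hxmn, hmn, -, hm⟩ :=
    h.symm.coprime_classification' (by rwa [Int.gcd_comm]) hzo (by positivity)
  have hmn_pos : 0 < m * n := by nlinarith [sq_pos_of_ne_zero hy]
  have hm : 0 < m := hm.lt_of_ne' (by rintro rfl; simp at hmn_pos)
  have hn : 0 < n := pos_of_mul_pos_right hmn_pos hm.le
  have hmnx : PythagoreanTriple m n x := by unfold PythagoreanTriple; linear_combination -hxmn
  obtain ⟨p, q, hq, hqp, hpq, hmnpq, hxpq⟩ := hmnx.exists_mul_eq_of_coprime hmn hm hn hx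
  -- `y ^ 2 = 4 p q (p ^ 2 - q ^ 2)` with pairwise coprime factors, so each factor is a square.
  obtain ⟨w, rfl⟩ : 2 ∣ y :=
    Int.prime_two.dvd_of_dvd_pow (n := 2) ⟨m * n, by rw [hymn]; ring⟩
  have hw : p * q * (p ^ 2 - q ^ 2) = w ^ 2 :=
    mul_left_cancel₀ four_ne_zero (by linear_combination -2 * hmnpq - hymn)
  obtain ⟨⟨d, hd, rfl⟩, ⟨e, he, rfl⟩, ⟨f, hf, hff⟩⟩ := exists_pos_sq_of_mul_mul_eq_sq hpq
    (isCoprime_sq_sub_sq_left hpq).symm (isCoprime_sq_sub_sq_right hpq).symm (by omega) hq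
    (by nlinarith) hw
  refine ⟨d, e, f, hd, ?_, he.ne', hf.ne', by linear_combination hff⟩
  calc d ≤ d ^ 4 := le_self_pow₀ (by omega) (by norm_num)
    _ < x := by rw [hxpq]; nlinarith [sq_pos_of_pos hq]

theorem exists_lt_of_pow_four_sub_pow_four_eq_sq {x y z : ℤ} (hx : 0 < x) (hy : y ≠ 0)
    (hz : z ≠ 0) (h : x ^ 4 - y ^ 4 = z ^ 2) :
    ∃ x' y' z', 0 < x' ∧ x' < x ∧ y' ≠ 0 ∧ z' ≠ 0 ∧ x' ^ 4 - y' ^ 4 = z' ^ 2 := by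
  obtain ⟨x, y, z, hx', hx'x, hy, hz, hxy, h⟩ :=
    exists_gcd_eq_one_of_pow_four_sub_pow_four_eq_sq hx hy hz h
  have htriple : PythagoreanTriple (y ^ 2) z (x ^ 2) := by
    unfold PythagoreanTriple; linear_combination -h
  have hcop : Int.gcd (y ^ 2) z = 1 := by
    have : IsCoprime (y ^ 4) (x ^ 4 - y ^ 4 * 1) :=
      IsCoprime.sub_mul_left_right_iff.mpr (isCoprime_iff_gcd_eq_one.mpr hxy).symm.pow
    rw [mul_one, h, show y ^ 4 = (y ^ 2) ^ 2 by ring, IsCoprime.pow_iff two_pos two_pos] at this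
    exact isCoprime_iff_gcd_eq_one.mp this
  suffices ∃ x' y' z', 0 < x' ∧ x' < x ∧ y' ≠ 0 ∧ z' ≠ 0 ∧ x' ^ 4 - y' ^ 4 = z' ^ 2 by
    obtain ⟨x', y', z', hx', hlt, rest⟩ := this
    exact ⟨x', y', z', hx', hlt.trans_le hx'x, rest⟩
  rcases htriple.even_odd_of_coprime hcop with ⟨-, hzo⟩ | ⟨hyo, -⟩
  · exact exists_lt_of_pythagoreanTriple_of_odd_right hx' hy htriple hcop hzo
  · exact exists_lt_of_pythagoreanTriple_of_odd_left hx' hy hz htriple hcop hyo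

theorem pow_four_sub_pow_four_ne_sq {x y z : ℤ} (hy : y ≠ 0) (hz : z ≠ 0) :
    x ^ 4 - y ^ 4 ≠ z ^ 2 := by
  intro h
  wlog hx : 0 < x generalizing x
  · rcases (not_lt.mp hx).lt_or_eq with hx | rfl
    · exact this (x := -x) (by linear_combination h) (by omega)
    · nlinarith [pow_pos (sq_pos_of_ne_zero hy) 2, sq_nonneg z]
  induction h' : x.toNat using Nat.strong_induction_on generalizing x y z with
  | _ n ih =>
    obtain ⟨x', y', z', hx', hlt, hy', hz', h'⟩ :=
      exists_lt_of_pow_four_sub_pow_four_eq_sq hx hy hz h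
    exact ih x'.toNat (by omega) hy' hz' h' hx' rfl

end Int

theorem Rat.pow_four_sub_pow_four_ne_sq {x y z : ℚ} (hy : y ≠ 0) (hz : z ≠ 0) :
    x ^ 4 - y ^ 4 ≠ z ^ 2 := by
  intro h
  set D : ℤ := x.den * y.den * z.den with hD
  have hD0 : (D : ℚ) ≠ 0 := by simp [hD]
  obtain ⟨a, ha⟩ : ∃ a : ℤ, (a : ℚ) = D * x :=
    ⟨x.num * y.den * z.den, by push_cast [hD]; rw [← Rat.mul_den_eq_num]; ring⟩
  obtain ⟨b, hb⟩ : ∃ b : ℤ, (b : ℚ) = D * y :=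
    ⟨x.den * y.num * z.den, by push_cast [hD]; rw [← Rat.mul_den_eq_num]; ring⟩
  obtain ⟨c, hc⟩ : ∃ c : ℤ, (c : ℚ) = D ^ 2 * z :=
    ⟨D * x.den * y.den * z.num, by push_cast [hD]; rw [← Rat.mul_den_eq_num]; ring⟩
  have hb0 : b ≠ 0 := by
    rw [← Int.cast_ne_zero (α := ℚ), hb]; exact mul_ne_zero hD0 hy
  have hc0 : c ≠ 0 := by
    rw [← Int.cast_ne_zero (α := ℚ), hc]; exact mul_ne_zero (pow_ne_zero 2 hD0) hz
  refine Int.pow_four_sub_pow_four_ne_sq (x := a) hb0 hc0 ?_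
  exact_mod_cast (by rw [ha, hb, hc]; linear_combination D ^ 4 * h :
    (a : ℚ) ^ 4 - (b : ℚ) ^ 4 = (c : ℚ) ^ 2)

theorem Real.exists_ratCast_eq_tan {θ : ℝ} (hs : ∃ q : ℚ, (q : ℝ) = Real.sin θ)
    (hc : ∃ q : ℚ, (q : ℝ) = Real.cos θ) : ∃ q : ℚ, (q : ℝ) = Real.tan θ := by
  obtain ⟨s, hs⟩ := hs
  obtain ⟨c, hc⟩ := hc
  exact ⟨s / c, by rw [Rat.cast_div, hs, hc, Real.tan_eq_sin_div_cos]⟩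

theorem no_heron_solution_one_sub_tan_pow_four :
    ¬ ∃ α ψ : ℝ,
      (∃ q : ℚ, (q : ℝ) = Real.sin α) ∧ (∃ q : ℚ, (q : ℝ) = Real.cos α) ∧
      (∃ q : ℚ, (q : ℝ) = Real.sin ψ) ∧ (∃ q : ℚ, (q : ℝ) = Real.cos ψ) ∧
      0 < α ∧ α < Real.pi / 2 ∧ 0 < Real.tan ψ ∧
      1 - Real.tan α ^ 4 = Real.tan α ^ 2 * Real.tan ψ ^ 2 := by
  rintro ⟨α, ψ, hsα, hcα, hsψ, hcψ, -, -, hψ, h⟩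
  obtain ⟨t, ht⟩ := Real.exists_ratCast_eq_tan hsα hcα
  obtain ⟨u, hu⟩ := Real.exists_ratCast_eq_tan hsψ hcψ
  rw [← ht, ← hu] at h
  rw [← hu] at hψ
  have hu0 : u ≠ 0 := by exact_mod_cast hψ.ne'
  have htu : 1 - t ^ 4 = t ^ 2 * u ^ 2 := by exact_mod_cast h
  have ht0 : t ≠ 0 := by rintro rfl; norm_num at htu
  exact Rat.pow_four_sub_pow_four_ne_sq (x := 1) ht0 (mul_ne_zero ht0 hu0)
    (by linear_combination htu)
end

section
/- Suppose positive rationals u₁, u₂, u₃, u₄ satisfy 2u₁² + 2u₂² = u₃² + u₄². Define u by 4u = 2u₁ + u₃ + u₄, and m = (2u₂ + u₃ - u₄)/(4u), n = (2u₂ - u₃ + u₄)/(4u). Then u₁ = (1-mn)u, u₂ = (m+n)u, u₃ = (1+mn-n+m)u, u₄ = (1+mn+n-m)u. -/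
/-!
Write `M = 4um = 2u₂ + u₃ - u₄` and `N = 4un = 2u₂ - u₃ + u₄`. Then `M + N = 4u₂` and `M - N = 2(u₃ - u₄)`
are linear, and the only quadratic relation needed is
`(4u)² - MN = (2u₁ + u₃ + u₄)² - 4u₂² + (u₃ - u₄)² = 4u₁ · 4u`, by the parallelogram equation.
Once `u₁ = (1 - mn)u` is known, `(1 + mn)u = 2u - u₁` and the formulas for `u₃, u₄` are linear.
-/

section

variable {K : Type*} [Field K] {a b c d u m n : K}

theorem add_mul_eq_of_eq_div (h4u : 4 * u ≠ 0)
    (hm : m = (2 * b + c - d) / (4 * u)) (hn : n = (2 * b - c + d) / (4 * u)) :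
    (m + n) * u = b := by
  have h4 : (4 : K) ≠ 0 := left_ne_zero_of_mul h4u
  have hu0 : u ≠ 0 := right_ne_zero_of_mul h4u
  subst hm hn
  field_simp
  ring

theorem two_mul_sub_mul_eq_of_eq_div (h4u : 4 * u ≠ 0)
    (hm : m = (2 * b + c - d) / (4 * u)) (hn : n = (2 * b - c + d) / (4 * u)) :
    2 * ((m - n) * u) = c - d := by
  have h4 : (4 : K) ≠ 0 := left_ne_zero_of_mul h4u
  have hu0 : u ≠ 0 := right_ne_zero_of_mul h4u
  subst hm hn
  field_simp
  ring

theorem one_sub_mul_mul_eq_of_parallelogram (h4u : 4 * u ≠ 0)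
    (hpar : 2 * a ^ 2 + 2 * b ^ 2 = c ^ 2 + d ^ 2) (hu : 4 * u = 2 * a + c + d)
    (hm : m = (2 * b + c - d) / (4 * u)) (hn : n = (2 * b - c + d) / (4 * u)) :
    (1 - m * n) * u = a := by
  have h4 : (4 : K) ≠ 0 := left_ne_zero_of_mul h4u
  have hu0 : u ≠ 0 := right_ne_zero_of_mul h4u
  subst hm hn
  field_simp
  linear_combination (-2) * hpar - (2 * a - 4 * u - c - d) * hu

end

theorem parallelogram_parameterization_converse_general (u₁ u₂ u₃ u₄ u m n : ℚ)
    (h1 : 0 < u₁) (h3 : 0 < u₃) (h4 : 0 < u₄)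
    (hpar : 2 * u₁ ^ 2 + 2 * u₂ ^ 2 = u₃ ^ 2 + u₄ ^ 2)
    (hu : 4 * u = 2 * u₁ + u₃ + u₄)
    (hm : m = (2 * u₂ + u₃ - u₄) / (4 * u))
    (hn : n = (2 * u₂ - u₃ + u₄) / (4 * u)) :
    u₁ = (1 - m * n) * u ∧ u₂ = (m + n) * u ∧
    u₃ = (1 + m * n - n + m) * u ∧ u₄ = (1 + m * n + n - m) * u := by
  have h4u : 4 * u ≠ 0 := by linarith
  have hu₁ := one_sub_mul_mul_eq_of_parallelogram h4u hpar hu hm hn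
  have hu₂ := add_mul_eq_of_eq_div h4u hm hn
  have hu₃₄ := two_mul_sub_mul_eq_of_eq_div h4u hm hn
  refine ⟨hu₁.symm, hu₂.symm, ?_, ?_⟩
  · linear_combination (-1 / 2) * hu₃₄ + hu₁ - hu / 2
  · linear_combination (1 / 2) * hu₃₄ + hu₁ - hu / 2

theorem parallelogram_parameterization_converse (u₁ u₂ u₃ u₄ u m n : ℚ)
    (h1 : 0 < u₁) (h2 : 0 < u₂) (h3 : 0 < u₃) (h4 : 0 < u₄)
    (hpar : 2 * u₁ ^ 2 + 2 * u₂ ^ 2 = u₃ ^ 2 + u₄ ^ 2)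
    (hu : 4 * u = 2 * u₁ + u₃ + u₄)
    (hm : m = (2 * u₂ + u₃ - u₄) / (4 * u))
    (hn : n = (2 * u₂ - u₃ + u₄) / (4 * u)) :
    u₁ = (1 - m * n) * u ∧ u₂ = (m + n) * u ∧
    u₃ = (1 + m * n - n + m) * u ∧ u₄ = (1 + m * n + n - m) * u :=
  parallelogram_parameterization_converse_general u₁ u₂ u₃ u₄ u m n h1 h3 h4 hpar hu hm hn
end

section
/- If positive reals u₁, u₂, u₃, u₄ satisfy 2u₁² + 2u₂² = u₃² + u₄², then there exists an angle α with u₃ = ω₊(α)u₁ - ω₋(α)u₂ and u₄ = ω₋(α)u₁ + ω₊(α)u₂, where ω₊(α) = cos α + sin α, ω₋(α) = cos α - sin α; explicitly cos α + sin α = (u₁u₃ + u₂u₄)/(u₁² + u₂²) and cos α - sin α = (u₁u₄ - u₂u₃)/(u₁² + u₂²). -/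
/-! The coefficients p = (u₁u₃ + u₂u₄)/S and q = (u₁u₄ - u₂u₃)/S, with S = u₁² + u₂², solve the
linear system u₃ = p u₁ - q u₂, u₄ = q u₁ + p u₂ whenever S ≠ 0. By Lagrange's identity
p² + q² = (u₃² + u₄²)/S, which the parallelogram equation makes equal to 2; and every pair with
p² + q² = 2 is (ω₊(α), ω₋(α)) for some α, because ((p + q)/2, (p - q)/2) lies on the unit circle. -/

open Real

lemma exists_cos_eq_and_sin_eq {c s : ℝ} (h : c ^ 2 + s ^ 2 = 1) :
    ∃ θ : ℝ, cos θ = c ∧ sin θ = s := by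
  have hnorm : ‖(⟨c, s⟩ : ℂ)‖ = 1 := by
    rw [Complex.norm_def, Complex.normSq_mk, ← sq, ← sq, h, Real.sqrt_one]
  obtain ⟨θ, hθ⟩ := (Complex.norm_eq_one_iff _).1 hnorm
  exact ⟨θ, by simpa using congrArg Complex.re hθ, by simpa using congrArg Complex.im hθ⟩

lemma exists_cos_add_sin_eq_and_cos_sub_sin_eq {p q : ℝ} (h : p ^ 2 + q ^ 2 = 2) :
    ∃ α : ℝ, cos α + sin α = p ∧ cos α - sin α = q := by
  obtain ⟨α, hcos, hsin⟩ :=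
    exists_cos_eq_and_sin_eq (c := (p + q) / 2) (s := (p - q) / 2) (by linear_combination h / 2)
  exact ⟨α, by rw [hcos, hsin]; ring, by rw [hcos, hsin]; ring⟩

theorem parallelogram_rotation_angle_general (u₁ u₂ u₃ u₄ : ℝ)
    (h1 : 0 < u₁)
    (hpar : 2 * u₁ ^ 2 + 2 * u₂ ^ 2 = u₃ ^ 2 + u₄ ^ 2) :
    ∃ α : ℝ,
      u₃ = (Real.cos α + Real.sin α) * u₁ - (Real.cos α - Real.sin α) * u₂ ∧
      u₄ = (Real.cos α - Real.sin α) * u₁ + (Real.cos α + Real.sin α) * u₂ ∧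
      Real.cos α + Real.sin α = (u₁ * u₃ + u₂ * u₄) / (u₁ ^ 2 + u₂ ^ 2) ∧
      Real.cos α - Real.sin α = (u₁ * u₄ - u₂ * u₃) / (u₁ ^ 2 + u₂ ^ 2) := by
  have hS : u₁ ^ 2 + u₂ ^ 2 ≠ 0 := by positivity
  have hsq : ((u₁ * u₃ + u₂ * u₄) / (u₁ ^ 2 + u₂ ^ 2)) ^ 2
      + ((u₁ * u₄ - u₂ * u₃) / (u₁ ^ 2 + u₂ ^ 2)) ^ 2 = 2 := by
    field_simp
    linear_combination (-(u₁ ^ 2 + u₂ ^ 2)) * hpar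
  obtain ⟨α, hplus, hminus⟩ := exists_cos_add_sin_eq_and_cos_sub_sin_eq hsq
  refine ⟨α, ?_, ?_, hplus, hminus⟩ <;> rw [hplus, hminus] <;> field_simp <;> ring

theorem parallelogram_rotation_angle (u₁ u₂ u₃ u₄ : ℝ)
    (h1 : 0 < u₁) (h2 : 0 < u₂) (h3 : 0 < u₃) (h4 : 0 < u₄)
    (hpar : 2 * u₁ ^ 2 + 2 * u₂ ^ 2 = u₃ ^ 2 + u₄ ^ 2) :
    ∃ α : ℝ,
      u₃ = (Real.cos α + Real.sin α) * u₁ - (Real.cos α - Real.sin α) * u₂ ∧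
      u₄ = (Real.cos α - Real.sin α) * u₁ + (Real.cos α + Real.sin α) * u₂ ∧
      Real.cos α + Real.sin α = (u₁ * u₃ + u₂ * u₄) / (u₁ ^ 2 + u₂ ^ 2) ∧
      Real.cos α - Real.sin α = (u₁ * u₄ - u₂ * u₃) / (u₁ ^ 2 + u₂ ^ 2) :=
  parallelogram_rotation_angle_general u₁ u₂ u₃ u₄ h1 hpar
end
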